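/- Assume the generalized Jones conjecture: for a link K with minimal braid index b, there is a constant l such that every braid w representing K satisfies b + |a(w) − l| ≤ n(w). If moreover some braid w₀ representing K satisfies a(w₀) − n(w₀) = −χ(K) and the Bennequin bound a(w) − n(w) ≤ −χ(K) holds for all representatives w, then every minimal braid index representative w' (with n(w') = b) satisfies a(w') − n(w') = −χ(K). -/
import Mathlib

/-- Assume the generalized Jones conjecture for a link `K`: with `b` the minimal braid
index, there is `l` such that every braid representative `w` of `K` satisfies
`b + |a(w) − l| ≤ n(w)`. If some representative `w₀` satisfies
`a(w₀) − n(w₀) = −χ(K)` and the Bennequin bound `a(w) − n(w) ≤ −χ(K)` holds for all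
representatives, then every minimal braid index representative `w'` (with `n(w') = b`)
satisfies `a(w') − n(w') = −χ(K)`. -/
theorem minimal_index_rep_maximizes_selflinking
    {Rep : Type*}  -- braid representatives of the fixed link K
    (a idx : Rep → ℤ)  -- exponent sum and braid index
    (b l χK : ℤ)
    (hcone : ∀ w : Rep, b + |a w - l| ≤ idx w)
    (w₀ : Rep) (hw₀ : a w₀ - idx w₀ = -χK)
    (hBennequin : ∀ w : Rep, a w - idx w ≤ -χK) :
    ∀ w' : Rep, idx w' = b → a w' - idx w' = -χK := by
  intro w' h
  have h1 := hcone w₀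
  have h2 := hcone w'
  have h3 := hBennequin w'
  have h4 : a w₀ - l ≤ |a w₀ - l| := le_abs_self _
  have h5 : |a w' - l| ≤ 0 := by linarith [h2, h.ge]
  have h6 : a w' = l := by
    have := abs_nonneg (a w' - l)
    have : |a w' - l| = 0 := le_antisymm h5 this
    have := abs_eq_zero.mp this
    linarith
  -- from h1 and h4: b + (a w₀ - l) ≤ idx w₀, with hw₀ gives l ≥ b - χK
  linarith
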